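/- arXiv:2102.12163 — 3 statements merged into one kernel-verified Lean document; each statement's English description precedes it below -/
import Mathlib

section
/- Under the Harten heuristics assumption and continuity of the reference scheme with constant C_L = 1 + \tilde{C}_L, the additional error of the adaptive scheme satisfies: if \tilde{C}_L = 0 then \|F^n - \hat{f}^n\| \le C_{MR} (n+1) \epsilon for all n, and if \tilde{C}_L > 0 then \|F^n - \hat{f}^n\| \le C_{MR} \epsilon (1 + (e^{\tilde{C}_L n} - 1)/\tilde{C}_L). -/
/-!
The error `eₙ = ‖Fⁿ - f̂ⁿ‖` satisfies `eₙ₊₁ ≤ (1 + C̃_L) eₙ + C_MR ε`: the reference step amplifies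
the previous error by at most its Lipschitz constant, and the adaptive step adds at most the
Harten threshold. Since `e₀ = 0`, the discrete Grönwall inequality gives
`eₙ ≤ C_MR ε ∑_{i<n} (1 + C̃_L)ⁱ`, which is `n C_MR ε` when `C̃_L = 0` and at most
`C_MR ε (e^{C̃_L n} - 1) / C̃_L` otherwise, because `1 + x ≤ eˣ`.
-/

open Finset

theorem discrete_gronwall_const {u : ℕ → ℝ} {a b : ℝ} (ha : 0 ≤ a)
    (hu : ∀ n, u (n + 1) ≤ a * u n + b) (n : ℕ) :
    u n ≤ u 0 * a ^ n + b * ∑ i ∈ range n, a ^ i := by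
  have := discrete_gronwall_prod_general (c := fun _ => a) (b := fun _ => b) (n₀ := 0)
    (fun n _ => hu n) (fun _ _ => ha) (Nat.zero_le n)
  simp only [prod_const, Nat.card_Ico, ← range_eq_Ico, ← mul_sum, card_range] at this
  rwa [← sum_range_reflect (a ^ ·) n, sum_congr rfl fun k _ => by
    rw [Nat.sub_sub, add_comm 1 k]]

theorem geom_sum_one_add_le_exp {c : ℝ} (hc : 0 < c) (n : ℕ) :
    ∑ i ∈ range n, (1 + c) ^ i ≤ (Real.exp (c * n) - 1) / c := by
  have hpow : (1 + c) ^ n ≤ Real.exp (c * n) := by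
    rw [mul_comm, Real.exp_nat_mul]
    exact pow_le_pow_left₀ (by linarith) (by linarith [Real.add_one_le_exp c]) n
  rw [geom_sum_eq (by linarith), add_sub_cancel_left]
  gcongr

theorem adaptive_scheme_error_estimate_general
    {V : Type*} [NormedAddCommGroup V]
    (L : V → V) (A : ℕ → V → V)
    (CL CMR ε : ℝ) (hCL : 0 ≤ CL)
    (hLip : ∀ F G : V, ‖L F - L G‖ ≤ (1 + CL) * ‖F - G‖)
    (F f : ℕ → V)
    (hF : ∀ n, F (n + 1) = L (F n))
    (hf : ∀ n, f (n + 1) = A (n + 1) (L (f n)))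
    (h0 : F 0 = f 0)
    (hHarten : ∀ n, ‖L (f n) - A (n + 1) (L (f n))‖ ≤ CMR * ε) :
    (CL = 0 → ∀ n : ℕ, ‖F n - f n‖ ≤ CMR * (n + 1) * ε) ∧
    (0 < CL → ∀ n : ℕ, ‖F n - f n‖ ≤ CMR * ε * (1 + (Real.exp (CL * n) - 1) / CL)) := by
  have hδ : 0 ≤ CMR * ε := (norm_nonneg _).trans (hHarten 0)
  have hstep (n : ℕ) : ‖F (n + 1) - f (n + 1)‖ ≤ (1 + CL) * ‖F n - f n‖ + CMR * ε := by
    rw [hF, hf]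
    exact (norm_sub_le_norm_sub_add_norm_sub _ _ _).trans (add_le_add (hLip _ _) (hHarten n))
  have hgeom (n : ℕ) : ‖F n - f n‖ ≤ CMR * ε * ∑ i ∈ range n, (1 + CL) ^ i := by
    simpa [h0] using discrete_gronwall_const (u := fun n => ‖F n - f n‖) (by linarith) hstep n
  refine ⟨?_, fun hpos n => ?_⟩
  · rintro rfl n
    have hn : ‖F n - f n‖ ≤ CMR * ε * n := by simpa using hgeom n
    linarith
  · calc ‖F n - f n‖ ≤ CMR * ε * ((Real.exp (CL * n) - 1) / CL) :=
          (hgeom n).trans (mul_le_mul_of_nonneg_left (geom_sum_one_add_le_exp hpos n) hδ)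
      _ ≤ CMR * ε * (1 + (Real.exp (CL * n) - 1) / CL) := by linarith

/-- Additional error estimate for the adaptive MR-LBM scheme.
Under the Harten heuristics (H1) and continuity of the reference scheme with
constant `C_L = 1 + C̃_L` (H2), the additional error satisfies
`‖F^n - f̂^n‖ ≤ C_MR (n+1) ε` if `C̃_L = 0` and
`‖F^n - f̂^n‖ ≤ C_MR ε (1 + (e^{C̃_L n} - 1)/C̃_L)` if `C̃_L > 0`. -/
theorem adaptive_scheme_error_estimate
    {V : Type*} [NormedAddCommGroup V] [NormedSpace ℝ V]
    (L : V → V) (A : ℕ → V → V)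
    (CL CMR ε : ℝ) (hCL : 0 ≤ CL) (hCMR : 0 < CMR) (hε : 0 < ε)
    (hLip : ∀ F G : V, ‖L F - L G‖ ≤ (1 + CL) * ‖F - G‖)
    (F f : ℕ → V)
    (hF : ∀ n, F (n + 1) = L (F n))
    (hf : ∀ n, f (n + 1) = A (n + 1) (L (f n)))
    (h0 : F 0 = f 0)
    (hHarten : ∀ n, ‖L (f n) - A (n + 1) (L (f n))‖ ≤ CMR * ε) :
    (CL = 0 → ∀ n : ℕ, ‖F n - f n‖ ≤ CMR * (n + 1) * ε) ∧
    (0 < CL → ∀ n : ℕ, ‖F n - f n‖ ≤ CMR * ε * (1 + (Real.exp (CL * n) - 1) / CL)) :=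
  adaptive_scheme_error_estimate_general L A CL CMR ε hCL hLip F f hF hf h0 hHarten
end

section
/- For the D1Q2 lattice Boltzmann scheme for linear advection with velocity c, 0 < c \le \lambda, relaxation parameter s \in (0,2], equilibrium M^{1,eq} = c M^0, the one-time-step operator L is nonexpansive for the weighted \ell^1 norm (continuity constant C_L = 1) whenever s \le 2/(1 + c/\lambda). -/
open scoped BigOperators

/-- Collision phase of the D1Q2 scheme for linear advection: with moments
`M⁰ = F⁰ + F¹`, `M¹ = λ(F⁰ - F¹)`, relax `M¹* = (1-s)M¹ + s c M⁰` (and `M⁰* = M⁰`),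
then return to populations. -/
noncomputable def d1q2Collide {N : ℕ} (lam c s : ℝ)
    (F : (ZMod N → ℝ) × (ZMod N → ℝ)) : (ZMod N → ℝ) × (ZMod N → ℝ) :=
  (fun k => ((F.1 k + F.2 k) + ((1 - s) * (lam * (F.1 k - F.2 k)) + s * c * (F.1 k + F.2 k)) / lam) / 2,
   fun k => ((F.1 k + F.2 k) - ((1 - s) * (lam * (F.1 k - F.2 k)) + s * c * (F.1 k + F.2 k)) / lam) / 2)

/-- One full time step of the D1Q2 scheme on a periodic lattice of `N` cells:
collision followed by streaming `F⁰ₖ ← F⁰*ₖ₋₁`, `F¹ₖ ← F¹*ₖ₊₁`. -/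
noncomputable def d1q2Step {N : ℕ} (lam c s : ℝ)
    (F : (ZMod N → ℝ) × (ZMod N → ℝ)) : (ZMod N → ℝ) × (ZMod N → ℝ) :=
  (fun k => (d1q2Collide lam c s F).1 (k - 1),
   fun k => (d1q2Collide lam c s F).2 (k + 1))

/-!
In population variables the collision acts on each cell by a `2 × 2` matrix whose columns
sum to one, and it is nonnegative exactly when `s (λ + |c|) ≤ 2λ`. A column-stochastic
matrix is an `ℓ¹` contraction, and streaming only permutes the cells of each population.
-/

open Matrix Finset

theorem Matrix.sum_abs_mulVec_le_of_mem_colStochastic {n R : Type*} [Fintype n] [DecidableEq n]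
    [Field R] [LinearOrder R] [IsStrictOrderedRing R] {M : Matrix n n R} {x : n → R}
    (hM : M ∈ colStochastic R n) : ∑ i, |(M *ᵥ x) i| ≤ ∑ i, |x i| :=
  calc ∑ i, |(M *ᵥ x) i|
      ≤ ∑ i, (M *ᵥ fun j => |x j|) i := by
        refine sum_le_sum fun i _ => (abs_sum_le_sum_abs _ _).trans_eq ?_
        simp only [mulVec, dotProduct, abs_mul, abs_of_nonneg (nonneg_of_mem_colStochastic hM)]
    _ = ∑ i, |x i| := sum_mulVec_of_mem_colStochastic hM

noncomputable def d1q2CollisionMatrix (lam c s : ℝ) : Matrix (Fin 2) (Fin 2) ℝ :=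
  !![1 - s * (lam - c) / (2 * lam), s * (lam + c) / (2 * lam);
     s * (lam - c) / (2 * lam), 1 - s * (lam + c) / (2 * lam)]

theorem d1q2CollisionMatrix_mem_colStochastic {lam c s : ℝ} (hlam : 0 < lam) (hs : 0 ≤ s)
    (hc : |c| ≤ lam) (hsc : s * (lam + |c|) ≤ 2 * lam) :
    d1q2CollisionMatrix lam c s ∈ colStochastic ℝ (Fin 2) := by
  obtain ⟨hc₁, hc₂⟩ := abs_le.mp hc
  have h2lam : 0 < 2 * lam := by positivity
  have hminus : s * (lam - c) ≤ 2 * lam := by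
    linarith [mul_le_mul_of_nonneg_left (neg_le_abs c) hs]
  have hplus : s * (lam + c) ≤ 2 * lam := by
    linarith [mul_le_mul_of_nonneg_left (le_abs_self c) hs]
  refine mem_colStochastic_iff_sum.mpr ⟨fun i j => ?_, fun j => ?_⟩
  · fin_cases i <;> fin_cases j <;>
      simp [d1q2CollisionMatrix, div_le_one h2lam, hminus, hplus] <;>
      exact div_nonneg (mul_nonneg hs (by linarith)) h2lam.le
  · fin_cases j <;> simp [d1q2CollisionMatrix, Fin.sum_univ_two]

theorem d1q2Collide_sub_d1q2Collide {N : ℕ} {lam : ℝ} (c s : ℝ) (hlam : lam ≠ 0)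
    (F G : (ZMod N → ℝ) × (ZMod N → ℝ)) (k : ZMod N) :
    ![(d1q2Collide lam c s F).1 k - (d1q2Collide lam c s G).1 k,
      (d1q2Collide lam c s F).2 k - (d1q2Collide lam c s G).2 k] =
      d1q2CollisionMatrix lam c s *ᵥ ![F.1 k - G.1 k, F.2 k - G.2 k] := by
  ext i
  fin_cases i <;>
    simp [d1q2Collide, d1q2CollisionMatrix, mulVec, dotProduct, Fin.sum_univ_two] <;>
    field_simp <;> ring

def l1Dist {N : ℕ} [NeZero N] (F G : (ZMod N → ℝ) × (ZMod N → ℝ)) : ℝ :=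
  ∑ k : ZMod N, (|F.1 k - G.1 k| + |F.2 k - G.2 k|)

theorem l1Dist_d1q2Step {N : ℕ} [NeZero N] (lam c s : ℝ) (F G : (ZMod N → ℝ) × (ZMod N → ℝ)) :
    l1Dist (d1q2Step lam c s F) (d1q2Step lam c s G) =
      l1Dist (d1q2Collide lam c s F) (d1q2Collide lam c s G) := by
  simp only [l1Dist, sum_add_distrib]
  congr 1
  · exact Fintype.sum_equiv (Equiv.subRight 1) _ _ fun k => rfl
  · exact Fintype.sum_equiv (Equiv.addRight 1) _ _ fun k => rfl

theorem l1Dist_d1q2Collide_le {N : ℕ} [NeZero N] {lam c s : ℝ} (hlam : 0 < lam) (hs : 0 ≤ s)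
    (hc : |c| ≤ lam) (hsc : s * (lam + |c|) ≤ 2 * lam) (F G : (ZMod N → ℝ) × (ZMod N → ℝ)) :
    l1Dist (d1q2Collide lam c s F) (d1q2Collide lam c s G) ≤ l1Dist F G := by
  refine sum_le_sum fun k _ => ?_
  simpa [Fin.sum_univ_two, ← d1q2Collide_sub_d1q2Collide c s hlam.ne'] using
    sum_abs_mulVec_le_of_mem_colStochastic (x := ![F.1 k - G.1 k, F.2 k - G.2 k])
      (d1q2CollisionMatrix_mem_colStochastic hlam hs hc hsc)

theorem d1q2_nonexpansive_l1_general
    (N : ℕ) [NeZero N] (lam c s Δx : ℝ)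
    (hΔx : 0 < Δx) (hc : 0 < c) (hcl : c ≤ lam)
    (hs0 : 0 < s)
    (hs : s ≤ 2 / (1 + c / lam)) :
    ∀ F G : (ZMod N → ℝ) × (ZMod N → ℝ),
      Δx * ∑ k : ZMod N,
          (|(d1q2Step lam c s F).1 k - (d1q2Step lam c s G).1 k| +
           |(d1q2Step lam c s F).2 k - (d1q2Step lam c s G).2 k|)
        ≤ Δx * ∑ k : ZMod N, (|F.1 k - G.1 k| + |F.2 k - G.2 k|) := by
  intro F G
  have hlam : 0 < lam := hc.trans_le hcl
  have hsc : s * (lam + |c|) ≤ 2 * lam := by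
    rw [abs_of_pos hc, ← le_div_iff₀ (by positivity)]
    calc s ≤ 2 / (1 + c / lam) := hs
      _ = 2 * lam / (lam + c) := by field_simp
  have hcollide := l1Dist_d1q2Collide_le hlam hs0.le (by rwa [abs_of_pos hc]) hsc F G
  rw [← l1Dist_d1q2Step] at hcollide
  exact mul_le_mul_of_nonneg_left hcollide hΔx.le

/-- for the D1Q2 scheme for linear advection with `0 < c ≤ λ` and
`s ∈ (0,2]`, the one-step operator is nonexpansive for the weighted `ℓ¹` norm
(continuity constant `C_L = 1`) whenever `s ≤ 2/(1 + c/λ)`. -/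
theorem d1q2_nonexpansive_l1
    (N : ℕ) [NeZero N] (lam c s Δx : ℝ)
    (hΔx : 0 < Δx) (hc : 0 < c) (hcl : c ≤ lam)
    (hs0 : 0 < s) (hs2 : s ≤ 2)
    (hs : s ≤ 2 / (1 + c / lam)) :
    ∀ F G : (ZMod N → ℝ) × (ZMod N → ℝ),
      Δx * ∑ k : ZMod N,
          (|(d1q2Step lam c s F).1 k - (d1q2Step lam c s G).1 k| +
           |(d1q2Step lam c s F).2 k - (d1q2Step lam c s G).2 k|)
        ≤ Δx * ∑ k : ZMod N, (|F.1 k - G.1 k| + |F.2 k - G.2 k|) :=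
  d1q2_nonexpansive_l1_general N lam c s Δx hΔx hc hcl hs0 hs
end

section
/- Thresholding error bound: let u be fine-level data with multiresolution decomposition (coarse averages, details d_{j,k}), and define the truncated data T u by setting to zero all details with |d_{j,k}| < \epsilon_j = 2^{j-\bar{J}}\epsilon. For the trivial prediction operator (\gamma = 0, \hat{f}_{j+1,2k+\delta} = f_{j,k}, the Haar case), the reconstructed fine-level data satisfies \|u - T u\|_{\ell^\infty} \le \sum_{j=\underline{J}+1}^{\bar{J}} \epsilon_j \le 2\epsilon. -/
/-!
Each reconstruction step adds `±` one detail of the father, so the error at a fine position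
is the sum of the discarded details along its dyadic branch, each below its threshold.
Read from the finest level down, the thresholds `2^{(i+1)-L} ε` form a geometric series
of ratio `1/2`, hence sum to at most `2ε`.
-/

open scoped BigOperators

/-- Haar (γ = 0) multiresolution reconstruction from coarse averages `c` and
details `d`: `f_{i+1,2k} = f_{i,k} + d_{i,k}` and `f_{i+1,2k+1} = f_{i,k} - d_{i,k}`.
`haarRecon c d i m` is the value at position `m` after climbing `i` levels. -/
noncomputable def haarRecon (c : ℤ → ℝ) (d : ℕ → ℤ → ℝ) : ℕ → ℤ → ℝ
  | 0, m => c m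
  | i + 1, m =>
      haarRecon c d i (Int.fdiv m 2) +
        (if m % 2 = 0 then (1 : ℝ) else -1) * d i (Int.fdiv m 2)

open Finset

lemma abs_sub_ite_abs_lt_le {t : ℝ} (ht : 0 ≤ t) (x : ℝ) :
    |x - if |x| < t then 0 else x| ≤ t := by
  split_ifs with h
  · simpa using h.le
  · simpa using ht

lemma haarRecon_succ_sub (c : ℤ → ℝ) (d d' : ℕ → ℤ → ℝ) (i : ℕ) (m : ℤ) :
    haarRecon c d (i + 1) m - haarRecon c d' (i + 1) m =
      (haarRecon c d i (m.fdiv 2) - haarRecon c d' i (m.fdiv 2)) +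
        (if m % 2 = 0 then (1 : ℝ) else -1) * (d i (m.fdiv 2) - d' i (m.fdiv 2)) := by
  simp only [haarRecon]
  ring

lemma abs_haarRecon_sub_le (c : ℤ → ℝ) {d d' : ℕ → ℤ → ℝ} {e : ℕ → ℝ}
    (hde : ∀ i k, |d i k - d' i k| ≤ e i) (n : ℕ) (m : ℤ) :
    |haarRecon c d n m - haarRecon c d' n m| ≤ ∑ i ∈ range n, e i := by
  induction n generalizing m with
  | zero => simp [haarRecon]
  | succ n ih =>
    have hsign : |(if m % 2 = 0 then (1 : ℝ) else -1)| = 1 := by split_ifs <;> simp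
    rw [haarRecon_succ_sub, sum_range_succ]
    refine (abs_add_le _ _).trans (add_le_add (ih _) ?_)
    rw [abs_mul, hsign, one_mul]
    exact hde n _

lemma sum_range_two_rpow_sub_le_two (L : ℕ) :
    ∑ i ∈ range L, (2 : ℝ) ^ (((i : ℝ) + 1) - L) ≤ 2 := by
  rw [← sum_range_reflect]
  calc ∑ i ∈ range L, (2 : ℝ) ^ ((((L - 1 - i : ℕ) : ℝ) + 1) - L)
      = ∑ i ∈ range L, (1 / 2 : ℝ) ^ i := by
        refine sum_congr rfl fun i hi => ?_
        have hiL : i < L := mem_range.mp hi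
        rw [show (((L - 1 - i : ℕ) : ℝ) + 1) - L = -(i : ℝ) by
              rw [Nat.cast_sub (by omega), Nat.cast_sub (by omega)]; push_cast; ring,
          Real.rpow_neg zero_le_two, Real.rpow_natCast, one_div, inv_pow]
    _ ≤ 2 := sum_geometric_two_le L

/-- thresholding error bound for the Haar case. Truncating to
zero all details with `|d_{j,k}| < ε_j = 2^{j-J̄} ε` changes the reconstructed
finest-level data by at most `Σ_j ε_j ≤ 2ε` in the `ℓ^∞` norm. Here the `L`
intermediate levels are indexed by `i = 0,…,L-1`, level `i` carrying the
threshold `ε_{J̲+i+1} = 2^{(i+1)-L} ε`. -/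
theorem haar_thresholding_error_bound
    (ε : ℝ) (hε : 0 < ε) (L : ℕ)
    (c : ℤ → ℝ) (d d' : ℕ → ℤ → ℝ)
    (hd' : ∀ i k, d' i k =
      if |d i k| < 2 ^ (((i : ℝ) + 1) - L) * ε then 0 else d i k) :
    (∀ m : ℤ, |haarRecon c d L m - haarRecon c d' L m|
        ≤ ∑ i ∈ Finset.range L, 2 ^ (((i : ℝ) + 1) - L) * ε) ∧
    (∑ i ∈ Finset.range L, 2 ^ (((i : ℝ) + 1) - L) * ε) ≤ 2 * ε := by
  refine ⟨abs_haarRecon_sub_le c (fun i k => ?_) L, ?_⟩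
  · rw [hd']
    exact abs_sub_ite_abs_lt_le (by positivity) _
  · rw [← sum_mul]
    exact mul_le_mul_of_nonneg_right (sum_range_two_rpow_sub_le_two L) hε.le
end
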